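/- arXiv:1302.3099 — 2 statements merged into one kernel-verified Lean document; each statement's English description precedes it below -/
import Mathlib

section
/- Let K_v ⊆ L_v ⊆ M_v be a tower of finite extensions of Q_p with M_v/K_v abelian and [M_v : L_v] = p. Let c_{M,v} and c_{L,v} be the conductors of M_v/K_v and L_v/K_v respectively. If c_{L,v} > e_v/(p-1), where e_v is the ramification index of K_v/Q_p, then c_{M,v} ≤ c_{L,v} + e_v. -/
open IsLocalRing

/-- The group `U^c = 1 + 𝔪^c` of principal units of level `c` (with `U^0` the full
unit group), viewed inside the fraction field `K` of the valuation ring `O`. -/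
def principalUnits (O : Type*) [CommRing O] [IsLocalRing O]
    (K : Type*) [Field K] [Algebra O K] (c : ℕ) : Set K :=
  {x : K | ∃ u : O, IsUnit u ∧ u - 1 ∈ maximalIdeal O ^ c ∧ algebraMap O K u = x}

/-- The set of norms of nonzero elements of `L` in `K`. -/
def normGroup (K : Type*) [Field K] (L : Type*) [Field L] [Algebra K L] : Set K :=
  {y : K | ∃ x : L, x ≠ 0 ∧ Algebra.norm K x = y}

/-- The conductor of the extension `L/K`: the least `c` with `U^c ⊆ N_{L/K}(L^×)`. -/
noncomputable def conductor' (O : Type*) [CommRing O] [IsLocalRing O]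
    (K : Type*) [Field K] [Algebra O K]
    (L : Type*) [Field L] [Algebra K L] : ℕ :=
  sInf {c : ℕ | principalUnits O K c ⊆ normGroup K L}


/-!
Let `c = c_L`. Since `(p - 1) c > e`, the binomial expansion gives
`(1 + d)^p ≡ 1 + p d (mod 𝔪^{n+1+e})` for `d ∈ 𝔪^n`, `n ≥ c`, so by successive approximation
in the complete ring `O` every `u ∈ U^{c+e}` is `v^p` for some `v ∈ U^c`. Such a `v` is a norm
`N_{L/K}(z)`, and then `u = N_{L/K}(z)^{[M:L]} = N_{M/K}(z)`.
-/

open Ideal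

open Finset in
theorem mul_sq_dvd_one_add_pow_sub {R : Type*} [CommRing R] {p : ℕ} (hp : p.Prime) (t : R) :
    (p * t ^ 2 : R) ∣ (1 + t) ^ p - 1 - p * t - t ^ p := by
  have hsplit : Ioo 0 p = insert 1 (Ioo 1 p) := by
    ext k; simp only [mem_Ioo, mem_insert]; have := hp.two_le; omega
  have hrest : t ^ 2 ∣ ∑ k ∈ Ioo 1 p, t ^ k * 1 ^ (p - k) * ((p.choose k / p : ℕ) : R) :=
    dvd_sum fun k hk => ((pow_dvd_pow t (mem_Ioo.mp hk).1).mul_right _).mul_right _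
  obtain ⟨s, hs⟩ := hrest
  refine ⟨s, ?_⟩
  rw [add_comm 1 t, add_pow_prime_eq' hp, hsplit, sum_insert (by simp), hs,
    Nat.choose_one_right, Nat.div_self hp.pos]
  push_cast
  ring

section AdicComplete

variable {R : Type*} [CommRing R] {I : Ideal R}

theorem IsPrecomplete.exists_limit_of_successive_approx [IsPrecomplete I R]
    (P : ℕ → R → Prop) {x₀ : R} (h₀ : P 0 x₀)
    (step : ∀ n x, P n x → ∃ y, P (n + 1) y ∧ y - x ∈ I ^ n) :
    ∃ (x : ℕ → R) (L : R), ∀ n, P n (x n) ∧ x n - L ∈ I ^ n := by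
  choose! next hnext using step
  let x : ℕ → R := fun n => Nat.rec x₀ next n
  have hP : ∀ n, P n (x n) := fun n => by
    induction n with
    | zero => exact h₀
    | succ n ih => exact (hnext n _ ih).1
  have hcauchy : ∀ {m n}, m ≤ n → x n - x m ∈ I ^ m := by
    intro m n hmn
    induction n, hmn using Nat.le_induction with
    | base => simp
    | succ n hmn ih =>
      rw [← sub_add_sub_cancel]
      exact add_mem (pow_le_pow_right hmn (hnext n _ (hP n)).2) ih
  obtain ⟨L, hL⟩ := IsPrecomplete.prec (I := I) (f := x) inferInstance fun {m n} hmn => by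
    rw [SModEq.sub_mem, smul_eq_mul, mul_top, ← neg_sub]
    exact neg_mem (hcauchy hmn)
  refine ⟨x, L, fun n => ⟨hP n, ?_⟩⟩
  simpa only [SModEq.sub_mem, smul_eq_mul, mul_top] using hL n

theorem IsHausdorff.eq_of_forall_sub_mem [IsHausdorff I R] {x y : R}
    (h : ∀ n, x - y ∈ I ^ n) : x = y :=
  (IsHausdorff.eq_iff_smodEq (I := I)).mpr fun n => by
    rw [SModEq.sub_mem, smul_eq_mul, mul_top]
    exact h n

end AdicComplete

section DiscreteValuationRing

variable {O : Type*} [CommRing O] [IsDomain O] [IsDiscreteValuationRing O]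

local notation "𝔪" => maximalIdeal O

theorem pow_add_le_pow_mul_span_singleton {a : O} {e : ℕ} (ha : a ∉ 𝔪 ^ (e + 1)) (k : ℕ) :
    𝔪 ^ (k + e) ≤ 𝔪 ^ k * span {a} := by
  obtain ⟨ϖ, hϖ⟩ := IsDiscreteValuationRing.exists_irreducible O
  have ha0 : span {a} ≠ ⊥ := by
    rw [Ne, span_singleton_eq_bot]
    rintro rfl
    exact ha (zero_mem _)
  obtain ⟨j, hj⟩ := IsDiscreteValuationRing.ideal_eq_span_pow_irreducible ha0 hϖ
  rw [← span_singleton_pow, ← (IsDiscreteValuationRing.irreducible_iff_uniformizer ϖ).mp hϖ]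
    at hj
  have hje : j ≤ e := by
    by_contra! h
    exact ha (pow_le_pow_right h (hj ▸ mem_span_singleton_self a))
  rw [hj, ← pow_add]
  exact pow_le_pow_right (by omega)

theorem exists_mul_one_add_pow_sub_mem {p e k n : ℕ} (hp : p.Prime) (he : (p : O) ∈ 𝔪 ^ e)
    (he' : (p : O) ∉ 𝔪 ^ (e + 1)) (hke : e < (p - 1) * k) (hkn : k ≤ n)
    {u v : O} (hv : v - 1 ∈ 𝔪 ^ k) (huv : u - v ^ p ∈ 𝔪 ^ (n + e)) :
    ∃ d ∈ 𝔪 ^ n, u - (v * (1 + d)) ^ p ∈ 𝔪 ^ (n + 1 + e) := by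
  obtain ⟨d, hd, hdp⟩ := mem_mul_span_singleton.mp (pow_add_le_pow_mul_span_singleton he' n huv)
  obtain ⟨s, hs⟩ := mul_sq_dvd_one_add_pow_sub hp d
  refine ⟨d, hd, ?_⟩
  have hk : k ≠ 0 := by
    rintro rfl
    simp at hke
  have hvp : v ^ p - 1 ∈ 𝔪 := by
    obtain ⟨c, hc⟩ := sub_dvd_pow_sub_pow v 1 p
    rw [one_pow] at hc
    rw [hc]
    exact mul_mem_right _ _ (pow_le_self hk hv)
  have hd2 : (p : O) * d ^ 2 ∈ 𝔪 ^ (n + 1 + e) := by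
    rw [add_comm _ e, pow_add]
    refine mul_mem_mul he (pow_le_pow_right (show n + 1 ≤ n + n by omega) ?_)
    rw [pow_add, pow_two]
    exact mul_mem_mul hd hd
  have hdp' : d ^ p ∈ 𝔪 ^ (n + 1 + e) := by
    have : (p - 1) * k ≤ (p - 1) * n := Nat.mul_le_mul_left _ hkn
    have : (p - 1) * n = p * n - n := Nat.sub_one_mul p n
    have : n ≤ p * n := Nat.le_mul_of_pos_left n hp.pos
    refine pow_le_pow_right (show n + 1 + e ≤ n * p by rw [mul_comm]; omega) ?_
    rw [pow_mul]
    exact pow_mem_pow hd p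
  -- `(v (1 + d))^p ≡ v^p (1 + p d) ≡ v^p + p d = u`, since `v^p ≡ 1 (mod 𝔪)`.
  have key : u - (v * (1 + d)) ^ p
      = -((v ^ p - 1) * (d * p)) - v ^ p * (p * d ^ 2 * s + d ^ p) := by
    rw [mul_pow]
    linear_combination (-1 : O) * hdp - v ^ p * hs
  rw [key]
  refine sub_mem (neg_mem ?_) (mul_mem_left _ _ (add_mem (mul_mem_right _ _ hd2) hdp'))
  rw [show n + 1 + e = 1 + (n + e) by omega, pow_add, pow_one]
  exact mul_mem_mul hvp (hdp ▸ huv)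

theorem exists_pow_eq_of_sub_one_mem [IsAdicComplete 𝔪 O] {p e k : ℕ} (hp : p.Prime)
    (he : (p : O) ∈ 𝔪 ^ e) (he' : (p : O) ∉ 𝔪 ^ (e + 1)) (hke : e < (p - 1) * k)
    {u : O} (hu : u - 1 ∈ 𝔪 ^ (k + e)) : ∃ v, v - 1 ∈ 𝔪 ^ k ∧ v ^ p = u := by
  obtain ⟨x, v, hx⟩ := IsPrecomplete.exists_limit_of_successive_approx (I := 𝔪)
    (fun n v => v - 1 ∈ 𝔪 ^ k ∧ u - v ^ p ∈ 𝔪 ^ (k + n + e)) (x₀ := 1)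
    ⟨by simp, by simpa using hu⟩
    fun n v ⟨hv, huv⟩ => by
      obtain ⟨d, hd, hd'⟩ :=
        exists_mul_one_add_pow_sub_mem hp he he' hke (Nat.le_add_right k n) hv huv
      have hvd : v * (1 + d) - v ∈ 𝔪 ^ (k + n) := by
        rw [mul_one_add, add_sub_cancel_left]
        exact mul_mem_left _ _ hd
      refine ⟨v * (1 + d), ⟨?_, hd'⟩, pow_le_pow_right (Nat.le_add_left n k) hvd⟩
      rw [← sub_add_sub_cancel _ v]
      exact add_mem (pow_le_pow_right (Nat.le_add_right k n) hvd) hv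
  refine ⟨v, ?_, (IsHausdorff.eq_of_forall_sub_mem (I := 𝔪) fun n => ?_).symm⟩
  · rw [← sub_sub_sub_cancel_left 1 v (x k)]
    exact sub_mem (hx k).1.1 (hx k).2
  · rw [← sub_add_sub_cancel _ (x n ^ p)]
    refine add_mem (pow_le_pow_right (by omega) (hx n).1.2) ?_
    obtain ⟨c, hc⟩ := sub_dvd_pow_sub_pow (x n) v p
    rw [hc]
    exact mul_mem_right _ _ (hx n).2

end DiscreteValuationRing

theorem pow_finrank_mem_normGroup {K L M : Type*} [Field K] [Field L] [Field M] [Algebra K L]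
    [Algebra L M] [Algebra K M] [IsScalarTower K L M] {z : K} (hz : z ∈ normGroup K L) :
    z ^ Module.finrank L M ∈ normGroup K M := by
  obtain ⟨y, hy0, rfl⟩ := hz
  refine ⟨algebraMap L M y, (map_ne_zero _).mpr hy0, ?_⟩
  rw [← Algebra.norm_norm (S := L), Algebra.norm_algebraMap, map_pow]

section Conductor

variable {O : Type*} [CommRing O] [IsLocalRing O] {K : Type*} [Field K] [Algebra O K]
  {L : Type*} [Field L] [Algebra K L]

theorem principalUnits_conductor'_subset (h : conductor' O K L ≠ 0) :
    principalUnits O K (conductor' O K L) ⊆ normGroup K L :=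
  Nat.sInf_mem (Nat.nonempty_of_pos_sInf (Nat.pos_of_ne_zero h))

theorem conductor'_le {c : ℕ} (h : principalUnits O K c ⊆ normGroup K L) :
    conductor' O K L ≤ c :=
  Nat.sInf_le h

end Conductor

theorem stmt_1_general (p : ℕ) [Fact p.Prime]
    (O : Type*) [CommRing O] [IsDomain O] [IsDiscreteValuationRing O]
    [IsAdicComplete (maximalIdeal O) O]
    (K : Type*) [Field K] [Algebra O K]
    (L M : Type*) [Field L] [Field M]
    [Algebra K L] [Algebra L M] [Algebra K M] [IsScalarTower K L M]
    (hdeg : Module.finrank L M = p)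
    (e : ℕ)
    (he : (p : O) ∈ maximalIdeal O ^ e) (he' : (p : O) ∉ maximalIdeal O ^ (e + 1))
    (hcL : (conductor' O K L) * (p - 1) > e) :
    conductor' O K M ≤ conductor' O K L + e := by
  have hp : p.Prime := Fact.out
  have hL : principalUnits O K (conductor' O K L) ⊆ normGroup K L :=
    principalUnits_conductor'_subset fun h => by simp [h] at hcL
  refine conductor'_le fun _ ⟨u, hu, hu1, hux⟩ => ?_
  obtain ⟨v, hv1, rfl⟩ := exists_pow_eq_of_sub_one_mem hp he he' (by linarith) hu1
  have hv : algebraMap O K v ∈ normGroup K L :=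
    hL ⟨v, (isUnit_pow_iff hp.ne_zero).mp hu, hv1, rfl⟩
  simpa [← hux, hdeg] using pow_finrank_mem_normGroup (M := M) hv

/-- Let `K ⊆ L ⊆ M` be a tower of finite extensions of `ℚ_p` (where `K` is the fraction
field of its ring of integers `O`, a complete discrete valuation ring with finite residue
field of characteristic `p`, the ramification index of `K/ℚ_p` being `e`, i.e.
`p ∈ 𝔪^e \ 𝔪^{e+1}`), with `M/K` abelian and `[M:L] = p`. If the conductor `c_L` of
`L/K` satisfies `c_L > e/(p-1)`, then the conductor `c_M` of `M/K` satisfies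
`c_M ≤ c_L + e`. -/
theorem stmt_1 (p : ℕ) [Fact p.Prime]
    (O : Type*) [CommRing O] [IsDomain O] [IsDiscreteValuationRing O]
    [IsAdicComplete (maximalIdeal O) O]
    [Finite (ResidueField O)] (hres : CharP (ResidueField O) p)
    (K : Type*) [Field K] [CharZero K] [Algebra O K] [IsFractionRing O K]
    (L M : Type*) [Field L] [Field M]
    [Algebra K L] [Algebra L M] [Algebra K M] [IsScalarTower K L M]
    [FiniteDimensional K L] [FiniteDimensional K M] [FiniteDimensional L M]
    [IsGalois K M] (habelian : ∀ σ τ : M ≃ₐ[K] M, σ * τ = τ * σ)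
    (hdeg : Module.finrank L M = p)
    (e : ℕ) (he₁ : 1 ≤ e)
    (he : (p : O) ∈ maximalIdeal O ^ e) (he' : (p : O) ∉ maximalIdeal O ^ (e + 1))
    (hcL : (conductor' O K L) * (p - 1) > e) :
    conductor' O K M ≤ conductor' O K L + e :=
  stmt_1_general p O K L M hdeg e he he' hcL
end

section
/- Let G be a finite abelian p-group with invariant factors [b_1, ..., b_t, a_1, ..., a_s] (in divisibility order) and H a finite abelian p-group with invariant factors [b_1, ..., b_t, p·a_1, ..., p·a_s], where v_p(a_1) > v_p(b_t) + 1. If G ≅ T × A and H ≅ T × A' where A' has invariant factors equal to p times those of A (and A, A' each have s invariant factors), then the invariant factors of T are [b_1, ..., b_t]. -/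
/-!
Record a finite abelian `p`-group `X ≅ ⨁ ZMod (p ^ e)` by the multiset `M` of its
exponents `e`. The number of `x : X` with `p ^ k • x = 0` is `p ^ ∑_{e ∈ M} min e k`: an
isomorphism invariant, additive in `M` under products, and determining `M` when `0 ∉ M`.

Let `β, α, γ, τ` be the exponent multisets of `b, a, A, T`. The two splittings give equal
invariants for `β + α` and `τ + γ`, and for `β + (α + 1)` and `τ + (γ + 1)`. Subtracting
the second equation from the first at level `k + 1` leaves
`#{e ∈ α | e ≤ k} = #{e ∈ γ | e ≤ k}`, so `α = γ`; cancelling `α` then gives `τ = β`.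
-/

/-- `l` is the list of invariant factors (in divisibility order) of the finite abelian
group `G`. -/
def IsInvariantFactors (G : Type*) [AddCommGroup G] (l : List ℕ) : Prop :=
  (∀ a ∈ l, 1 < a) ∧ l.Chain' (· ∣ ·) ∧
    Nonempty (G ≃+ ((i : Fin l.length) → ZMod (l.get i)))

open Finset

lemma Nat.gcd_pow_pow_eq_pow_min (p a b : ℕ) : (p ^ a).gcd (p ^ b) = p ^ min a b := by
  rcases le_total a b with h | h
  · rw [Nat.gcd_eq_left (pow_dvd_pow p h), min_eq_left h]
  · rw [Nat.gcd_eq_right (pow_dvd_pow p h), min_eq_right h]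

lemma List.exists_map_pow_eq {p : ℕ} {l : List ℕ} (h : ∀ x ∈ l, ∃ k, x = p ^ k) :
    ∃ E : List ℕ, E.map (p ^ ·) = l := by
  rw [← Set.mem_range, Set.range_list_map]
  exact fun x hx => (h x hx).imp fun _ hk => hk.symm

lemma List.map_mul_map_pow (p : ℕ) (E : List ℕ) :
    (E.map (p ^ ·)).map (p * ·) = (E.map (· + 1)).map (p ^ ·) := by
  simp [pow_succ']

namespace Multiset

def sumMin (M : Multiset ℕ) (k : ℕ) : ℕ := (M.map (min · k)).sum

lemma sumMin_add (M N : Multiset ℕ) (k : ℕ) : (M + N).sumMin k = M.sumMin k + N.sumMin k := by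
  simp [sumMin]

lemma sumMin_succ (M : Multiset ℕ) (k : ℕ) :
    M.sumMin (k + 1) = M.sumMin k + M.countP (k < ·) := by
  induction M using Multiset.induction with
  | empty => simp [sumMin]
  | cons e M ih =>
    simp only [sumMin, map_cons, sum_cons, countP_cons] at *
    split_ifs <;> omega

lemma sumMin_map_succ (M : Multiset ℕ) (k : ℕ) :
    (M.map (· + 1)).sumMin (k + 1) = M.sumMin k + card M := by
  induction M using Multiset.induction with
  | empty => simp [sumMin]
  | cons e M ih =>
    simp only [sumMin, map_cons, sum_cons, card_cons] at *
    omega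

lemma countP_le_add_countP_lt (M : Multiset ℕ) (k : ℕ) :
    M.countP (· ≤ k) + M.countP (k < ·) = card M := by
  rw [card_eq_countP_add_countP (· ≤ k)]
  simp only [not_le]

lemma countP_le_succ (M : Multiset ℕ) (k : ℕ) :
    M.countP (· ≤ k + 1) = M.countP (· ≤ k) + M.count (k + 1) := by
  induction M using Multiset.induction with
  | empty => simp
  | cons e M ih =>
    simp only [countP_cons, count_cons]
    split_ifs <;> omega

lemma eq_of_forall_countP_le_eq {M N : Multiset ℕ}
    (h : ∀ k, M.countP (· ≤ k) = N.countP (· ≤ k)) : M = N := by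
  ext x
  cases x with
  | zero => simpa [count, Nat.le_zero, eq_comm] using h 0
  | succ k =>
    have := M.countP_le_succ k; have := N.countP_le_succ k; have := h k; have := h (k + 1)
    omega

lemma eq_of_forall_sumMin_eq {M N : Multiset ℕ} (hM : 0 ∉ M) (hN : 0 ∉ N)
    (h : ∀ k, M.sumMin k = N.sumMin k) : M = N := by
  have hlt : ∀ k, M.countP (k < ·) = N.countP (k < ·) := fun k => by
    have := M.sumMin_succ k; have := N.sumMin_succ k; have := h k; have := h (k + 1)
    omega
  have hcard : card M = card N := by
    rw [← countP_eq_card.2 fun e he => Nat.pos_of_ne_zero (ne_of_mem_of_not_mem he hM),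
      ← countP_eq_card.2 fun e he => Nat.pos_of_ne_zero (ne_of_mem_of_not_mem he hN), hlt 0]
  refine eq_of_forall_countP_le_eq fun k => ?_
  have := M.countP_le_add_countP_lt k; have := N.countP_le_add_countP_lt k; have := hlt k
  omega

lemma eq_of_sumMin_add_eq_of_sumMin_add_map_succ_eq {B A T L : Multiset ℕ}
    (hB : 0 ∉ B) (hT : 0 ∉ T)
    (h : ∀ k, (B + A).sumMin k = (T + L).sumMin k)
    (hsucc : ∀ k, (B + A.map (· + 1)).sumMin k = (T + L.map (· + 1)).sumMin k) : T = B := by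
  have hAL : A = L := eq_of_forall_countP_le_eq fun k => by
    have h1 := h (k + 1)
    have h2 := hsucc (k + 1)
    rw [sumMin_add, sumMin_add, sumMin_succ A, sumMin_succ L] at h1
    rw [sumMin_add, sumMin_add, sumMin_map_succ, sumMin_map_succ] at h2
    have := A.countP_le_add_countP_lt k; have := L.countP_le_add_countP_lt k
    omega
  subst hAL
  exact eq_of_forall_sumMin_eq hT hB fun k => by have := h k; simp only [sumMin_add] at this; omega

end Multiset

section TorsionCount

variable {X Y : Type*} [AddCommGroup X] [AddCommGroup Y]

lemma card_nsmul_eq_zero_congr (e : X ≃+ Y) (n : ℕ) :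
    Nat.card {x : X // n • x = 0} = Nat.card {y : Y // n • y = 0} :=
  Nat.card_congr <| e.toEquiv.subtypeEquiv fun x => by simp [← map_nsmul]

lemma card_nsmul_eq_zero_prod (n : ℕ) :
    Nat.card {z : X × Y // n • z = 0} =
      Nat.card {x : X // n • x = 0} * Nat.card {y : Y // n • y = 0} := by
  rw [← Nat.card_prod]
  exact Nat.card_congr <| (Equiv.subtypeEquivRight fun z => by simp [Prod.ext_iff]).trans
    Equiv.subtypeProdEquivProd

lemma card_nsmul_eq_zero_pi {ι : Type*} [Fintype ι] (M : ι → Type*) [∀ i, AddCommGroup (M i)]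
    (n : ℕ) :
    Nat.card {x : ∀ i, M i // n • x = 0} = ∏ i, Nat.card {x : M i // n • x = 0} := by
  rw [← Nat.card_pi]
  exact Nat.card_congr <| (Equiv.subtypeEquivRight fun x => by simp [funext_iff]).trans
    Equiv.subtypePiEquivPi

lemma card_nsmul_eq_zero_zmod (m : ℕ) [NeZero m] (n : ℕ) :
    Nat.card {x : ZMod m // n • x = 0} = m.gcd n := by
  have := IsAddCyclic.card_nsmulAddMonoidHom_ker (ZMod m) n
  rwa [Nat.card_zmod] at this

end TorsionCount

def HasCyclicExponents (p : ℕ) (X : Type*) [AddCommGroup X] (M : Multiset ℕ) : Prop :=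
  ∃ (ι : Type) (_ : Fintype ι) (v : ι → ℕ), univ.val.map v = M ∧
    Nonempty (X ≃+ ∀ i, ZMod (p ^ v i))

namespace HasCyclicExponents

variable {p : ℕ} {X Y : Type*} [AddCommGroup X] [AddCommGroup Y] {M N : Multiset ℕ}

lemma of_addEquiv (h : HasCyclicExponents p X M) (e : X ≃+ Y) : HasCyclicExponents p Y M := by
  obtain ⟨ι, _, v, hv, ⟨f⟩⟩ := h
  exact ⟨ι, _, v, hv, ⟨e.symm.trans f⟩⟩

lemma prod (hX : HasCyclicExponents p X M) (hY : HasCyclicExponents p Y N) :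
    HasCyclicExponents p (X × Y) (M + N) := by
  obtain ⟨ι, _, v, rfl, ⟨e⟩⟩ := hX
  obtain ⟨κ, _, w, rfl, ⟨f⟩⟩ := hY
  refine ⟨ι ⊕ κ, inferInstance, Sum.elim v w, ?_, ⟨(e.prodCongr f).trans
    (LinearEquiv.sumPiEquivProdPi ℤ ι κ fun s =>
      ZMod (p ^ Sum.elim v w s)).toAddEquiv.symm⟩⟩
  rw [← univ_disjSum_univ]
  simp [Finset.disjSum, Multiset.disjSum, Multiset.map_map, Function.comp_def]

lemma card_eq (h : HasCyclicExponents p X M) : Nat.card X = p ^ M.sum := by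
  obtain ⟨ι, _, v, rfl, ⟨e⟩⟩ := h
  rw [Nat.card_congr e.toEquiv, Nat.card_pi]
  simp only [Nat.card_zmod, Finset.prod_pow_eq_pow_sum]
  rfl

lemma card_pow_nsmul_eq_zero (hp : p ≠ 0) (h : HasCyclicExponents p X M) (k : ℕ) :
    Nat.card {x : X // p ^ k • x = 0} = p ^ M.sumMin k := by
  obtain ⟨ι, _, v, rfl, ⟨e⟩⟩ := h
  have : ∀ i, NeZero (p ^ v i) := fun i => ⟨pow_ne_zero _ hp⟩
  rw [card_nsmul_eq_zero_congr e, card_nsmul_eq_zero_pi]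
  simp only [card_nsmul_eq_zero_zmod, Nat.gcd_pow_pow_eq_pow_min, Finset.prod_pow_eq_pow_sum,
    Multiset.sumMin, Multiset.map_map]
  rfl

lemma sumMin_eq (hp : p.Prime) (hM : HasCyclicExponents p X M) (hN : HasCyclicExponents p X N)
    (k : ℕ) : M.sumMin k = N.sumMin k :=
  Nat.pow_right_injective hp.two_le <| by
    simp only [← hM.card_pow_nsmul_eq_zero hp.ne_zero, ← hN.card_pow_nsmul_eq_zero hp.ne_zero]

lemma nonempty_addEquiv (hX : HasCyclicExponents p X M) (hY : HasCyclicExponents p Y M) :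
    Nonempty (X ≃+ Y) := by
  classical
  obtain ⟨ι, _, v, rfl, ⟨e⟩⟩ := hX
  obtain ⟨κ, _, w, hw, ⟨f⟩⟩ := hY
  have hfiber : ∀ c, Fintype.card {i // v i = c} = Fintype.card {j // w j = c} := fun c => by
    simpa [Multiset.count_map, Fintype.card_subtype, Finset.card_def, Finset.filter_val, eq_comm]
      using congrArg (Multiset.count c) hw
  let σ : ι ≃ κ := Equiv.ofFiberEquiv fun c => Fintype.equivOfCardEq (hfiber c)
  exact ⟨e.trans <| (AddEquiv.piCongrRight fun i =>
    (ZMod.ringEquivCongr (congrArg (p ^ ·) (Equiv.ofFiberEquiv_map _ i).symm)).toAddEquiv).trans <|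
      (RingEquiv.piCongrLeft (fun j => ZMod (p ^ w j)) σ).toAddEquiv.trans f.symm⟩

end HasCyclicExponents

lemma dvd_card_of_addEquiv_pi_zmod {X : Type*} [AddCommGroup X] {ι : Type*} [Fintype ι]
    {m : ι → ℕ} (e : X ≃+ ∀ i, ZMod (m i)) (i : ι) : m i ∣ Nat.card X := by
  rw [Nat.card_congr e.toEquiv, Nat.card_pi]
  simpa [Nat.card_zmod] using Finset.dvd_prod_of_mem m (Finset.mem_univ i)

lemma exists_hasCyclicExponents_of_card_dvd_pow {p N : ℕ} (hp : p.Prime) {X : Type*}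
    [AddCommGroup X] {ι : Type} [Fintype ι] {m : ι → ℕ} (hm : ∀ i, 1 < m i)
    (e : X ≃+ ∀ i, ZMod (m i)) (hX : Nat.card X ∣ p ^ N) :
    ∃ M, 0 ∉ M ∧ HasCyclicExponents p X M := by
  choose v hv using fun i => (Nat.dvd_prime_pow hp).1 ((dvd_card_of_addEquiv_pi_zmod e i).trans hX)
  refine ⟨univ.val.map v, fun h0 => ?_, ι, inferInstance, v, rfl,
    ⟨e.trans <| AddEquiv.piCongrRight fun i => (ZMod.ringEquivCongr (hv i).2).toAddEquiv⟩⟩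
  obtain ⟨i, -, hi⟩ := Multiset.mem_map.1 h0
  simpa [(hv i).2, hi] using hm i

namespace IsInvariantFactors

variable {p : ℕ} {X : Type*} [AddCommGroup X]

lemma of_append_left {l l' : List ℕ} (h : IsInvariantFactors X (l ++ l')) :
    IsInvariantFactors (∀ i : Fin l.length, ZMod (l.get i)) l :=
  ⟨fun x hx => h.1 x (List.mem_append_left _ hx), (List.isChain_append.1 h.2.1).1,
    ⟨AddEquiv.refl _⟩⟩

lemma zero_notMem {E : List ℕ} (h : IsInvariantFactors X (E.map (p ^ ·))) :
    0 ∉ (E : Multiset ℕ) :=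
  fun h0 => (h.1 1 (List.mem_map.2 ⟨0, h0, pow_zero p⟩)).false

lemma card_eq {l : List ℕ} (h : IsInvariantFactors X l) : Nat.card X = l.prod := by
  obtain ⟨-, -, ⟨e⟩⟩ := h
  rw [Nat.card_congr e.toEquiv, Nat.card_pi]
  simp [Nat.card_zmod]

lemma exists_map_pow_eq (hp : p.Prime) {l : List ℕ} {N : ℕ} (h : IsInvariantFactors X l)
    (hX : Nat.card X ∣ p ^ N) : ∃ E : List ℕ, E.map (p ^ ·) = l :=
  List.exists_map_pow_eq fun _ hx => ((Nat.dvd_prime_pow hp).1 <|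
    (List.dvd_prod hx).trans (h.card_eq ▸ hX)).imp fun _ hk => hk.2

lemma hasCyclicExponents {E : List ℕ} (h : IsInvariantFactors X (E.map (p ^ ·))) :
    HasCyclicExponents p X E := by
  obtain ⟨-, -, ⟨e⟩⟩ := h
  let v : Fin (E.map (p ^ ·)).length → ℕ := fun i => E.get (i.cast (List.length_map _))
  refine ⟨_, inferInstance, v, ?_,
    ⟨e.trans <| AddEquiv.piCongrRight fun i => (ZMod.ringEquivCongr (by simp [v])).toAddEquiv⟩⟩
  rw [Fin.univ_val_map]
  congr 1
  apply List.ext_get <;> simp [v]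

end IsInvariantFactors

theorem stmt_9_general (p : ℕ) (hp : p.Prime)
    (G H T A A' : Type*) [AddCommGroup G] [AddCommGroup H] [AddCommGroup T]
    [AddCommGroup A] [AddCommGroup A']
    [Finite T]
    (b a : List ℕ)
    (hbpow : ∀ x ∈ b, ∃ k : ℕ, x = p ^ k) (hapow : ∀ x ∈ a, ∃ k : ℕ, x = p ^ k)
    (hG : IsInvariantFactors G (b ++ a))
    (hH : IsInvariantFactors H (b ++ a.map (p * ·)))
    (hGsplit : Nonempty (G ≃+ T × A)) (hHsplit : Nonempty (H ≃+ T × A'))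
    (la : List ℕ)
    (hA : IsInvariantFactors A la)
    (hA' : IsInvariantFactors A' (la.map (p * ·))) :
    IsInvariantFactors T b := by
  obtain ⟨β, rfl⟩ := List.exists_map_pow_eq hbpow
  obtain ⟨α, rfl⟩ := List.exists_map_pow_eq hapow
  obtain ⟨eG⟩ := hGsplit
  obtain ⟨eH⟩ := hHsplit
  have hb := hG.of_append_left
  rw [← List.map_append] at hG
  rw [List.map_mul_map_pow, ← List.map_append] at hH
  have hGexp : HasCyclicExponents p G ((β : Multiset ℕ) + α) := by
    simpa using hG.hasCyclicExponents
  have hHexp : HasCyclicExponents p H ((β : Multiset ℕ) + (α : Multiset ℕ).map (· + 1)) := by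
    simpa using hH.hasCyclicExponents
  have hGcard : Nat.card T * Nat.card A ∣ p ^ ((β : Multiset ℕ) + α).sum := by
    rw [← hGexp.card_eq, Nat.card_congr eG.toEquiv, Nat.card_prod]
  obtain ⟨γ, rfl⟩ := hA.exists_map_pow_eq hp (dvd_of_mul_left_dvd hGcard)
  rw [List.map_mul_map_pow] at hA'
  obtain ⟨ι, _, n, hn, ⟨eT⟩⟩ := AddCommGroup.equiv_directSum_zmod_of_finite' T
  obtain ⟨τ, hτ0, hτ⟩ := exists_hasCyclicExponents_of_card_dvd_pow hp hn
    (eT.trans (DirectSum.addEquivProd _)) (dvd_of_mul_right_dvd hGcard)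
  have hτβ : τ = β := Multiset.eq_of_sumMin_add_eq_of_sumMin_add_map_succ_eq hb.zero_notMem hτ0
    ((hGexp.of_addEquiv eG).sumMin_eq hp (hτ.prod hA.hasCyclicExponents))
    (by simpa using (hHexp.of_addEquiv eH).sumMin_eq hp (hτ.prod hA'.hasCyclicExponents))
  exact ⟨hb.1, hb.2.1, (hτβ ▸ hτ).nonempty_addEquiv hb.hasCyclicExponents⟩

/-- Let `G`, `H` be finite abelian `p`-groups with invariant factors
`[b_1, ..., b_t, a_1, ..., a_s]` and `[b_1, ..., b_t, p a_1, ..., p a_s]`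
respectively, where `v_p(a_1) > v_p(b_t) + 1` (expressed as `p^2 * b_j ∣ a_i`,
all entries being powers of `p`). If `G ≅ T × A` and `H ≅ T × A'`, where `A` has
`s` invariant factors and the invariant factors of `A'` are `p` times those of `A`,
then the invariant factors of `T` are `[b_1, ..., b_t]`. -/
theorem stmt_9 (p : ℕ) (hp : p.Prime)
    (G H T A A' : Type*) [AddCommGroup G] [AddCommGroup H] [AddCommGroup T]
    [AddCommGroup A] [AddCommGroup A']
    [Finite G] [Finite H] [Finite T] [Finite A] [Finite A']
    (hTp : ∀ x : T, ∃ n : ℕ, p ^ n • x = 0)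
    (b a : List ℕ)
    (hbpow : ∀ x ∈ b, ∃ k : ℕ, x = p ^ k) (hapow : ∀ x ∈ a, ∃ k : ℕ, x = p ^ k)
    (hane : a ≠ [])
    (hG : IsInvariantFactors G (b ++ a))
    (hH : IsInvariantFactors H (b ++ a.map (p * ·)))
    (hvp : ∀ y ∈ b, ∀ x ∈ a, p ^ 2 * y ∣ x)
    (hGsplit : Nonempty (G ≃+ T × A)) (hHsplit : Nonempty (H ≃+ T × A'))
    (la : List ℕ) (hla : la.length = a.length)
    (hA : IsInvariantFactors A la)
    (hA' : IsInvariantFactors A' (la.map (p * ·))) :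
    IsInvariantFactors T b :=
  stmt_9_general p hp G H T A A' b a hbpow hapow hG hH hGsplit hHsplit la hA hA'
end
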